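/- For all integers r, f ≥ 0, the one-row flagged factorial Q-function satisfies Q_{(r),(f)}(x;z|b) = Σ_{k=0}^{f} q_{r−k}^{[r−k−1]}(x|b) · (e_k^{[f | k−f−1]}(z | τ^{k−r}b))^⋆, where ⋆ is the substitution b_{−i} ↦ −b_{i+1} for all i ≥ 0. The identity holds for every number n of x-variables. -/

import Mathlib

open Finset

noncomputable section

variable {R : Type*} [CommRing R]

/-- The formal power series `1/(1 - x·u)`. -/
def geomSeries (x : R) : PowerSeries R := PowerSeries.mk fun m => x ^ m

/-- `e_u^{[k]}(c)`: the power series `∏_{i=1}^k (1 + c_i u)` for `k ≥ 0`, and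
`∏_{i=1}^{-k} (1 - c_i u)⁻¹` for `k < 0`.  The sequence `c` is read at indices `1, 2, …`. -/
def eSer (k : ℤ) (c : ℕ → R) : PowerSeries R :=
  if 0 ≤ k then ∏ i ∈ Finset.range k.toNat, (1 + PowerSeries.C (c (i + 1)) * PowerSeries.X)
  else ∏ i ∈ Finset.range (-k).toNat, geomSeries (c (i + 1))

/-- `q_u(x) = ∏_{i=1}^n (1 + x_i u)/(1 - x_i u)`, with `n` x-variables. -/
def qSer (n : ℕ) (x : ℕ → R) : PowerSeries R :=
  ∏ i ∈ Finset.range n,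
    ((1 + PowerSeries.C (x (i + 1)) * PowerSeries.X) * geomSeries (x (i + 1)))

/-- The coefficient of `u^m` (`m : ℤ`) of a power series; zero when `m < 0`. -/
def coeffZ (m : ℤ) (φ : PowerSeries R) : R :=
  if 0 ≤ m then PowerSeries.coeff m.toNat φ else 0

/-- `q_m^{[ℓ]}(x|c)`: the coefficient of `u^m` in `q_u(x)·e_u^{[ℓ]}(c)`. -/
def qC (m ℓ : ℤ) (n : ℕ) (x c : ℕ → R) : R := coeffZ m (qSer n x * eSer ℓ c)

/-- `q_m^{[k|ℓ]}(x;z|c)`: the coefficient of `u^m` in `q_u(x)·e_u^{[k]}(z)·e_u^{[ℓ]}(c)`. -/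
def qC2 (m k ℓ : ℤ) (n : ℕ) (x z c : ℕ → R) : R :=
  coeffZ m (qSer n x * eSer k z * eSer ℓ c)

/-- `e_m^{[k]}(c)`. -/
def eC (m k : ℤ) (c : ℕ → R) : R := coeffZ m (eSer k c)

/-- `e_m^{[k|ℓ]}(z|c)`: the coefficient of `u^m` in `e_u^{[k]}(z)·e_u^{[ℓ]}(c)`. -/
def eC2 (m k ℓ : ℤ) (z c : ℕ → R) : R := coeffZ m (eSer k z * eSer ℓ c)

/-- Extension of `b` to all integer indices using the convention `b_{-i} = -b_{i+1}` for
`i ≥ 0`; positive indices are untouched.  This also implements the `⋆` substitution. -/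
def bext (b : ℤ → R) : ℤ → R := fun j => if 0 < j then b j else -b (1 - j)

/-- `ε(0) = 1` and `ε(m) = 2·(-1)^m` for `m ≥ 1`. -/
def pfEps (m : ℕ) : ℤ := if m = 0 then 1 else 2 * (-1) ^ m

/-- The subscript `α_i + Σ_{j>i} m_{ij} − Σ_{j<i} m_{ji}` in the Schur–Pfaffian. -/
def pfIdx {r : ℕ} (α : Fin r → ℤ) (m : Fin r → Fin r → ℕ) (i : Fin r) : ℤ :=
  α i + ∑ j, (if i < j then (m i j : ℤ) else 0) - ∑ j, (if j < i then (m j i : ℤ) else 0)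

/-- The Schur–Pfaffian `Pf[c^{(1)}_{α_1} ⋯ c^{(r)}_{α_r}]`, as the (finitely supported) sum
over tuples of nonnegative integers `(m_{ij})_{1 ≤ i < j ≤ r}`. -/
def schurPf {r : ℕ} (c : Fin r → ℤ → R) (α : Fin r → ℤ) : R :=
  ∑ᶠ m ∈ {m : Fin r → Fin r → ℕ | ∀ i j, ¬ i < j → m i j = 0},
    (∏ i, ∏ j, if i < j then (pfEps (m i j) : R) else 1) * ∏ i, c i (pfIdx α m i)

/-- The alphabet of primed, unmarked and circled numbers. -/
inductive MSTEntry where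
  | prime : ℕ → MSTEntry
  | unmarked : ℕ → MSTEntry
  | circ : ℕ → MSTEntry
deriving DecidableEq

namespace MSTEntry

/-- Whether an entry is circled (`1`) or not (`0`). -/
def isCirc : MSTEntry → ℕ
  | circ _ => 1
  | _ => 0

/-- Key realizing the order `1' < 1 < 2' < 2 < ⋯` within each class. -/
def key : MSTEntry → ℕ
  | prime k => 2 * k - 1
  | unmarked k => 2 * k
  | circ k => k

/-- The numeric value of an entry. -/
def val : MSTEntry → ℕ
  | prime k => k
  | unmarked k => k
  | circ k => k

/-- The total order `1' < 1 < 2' < 2 < ⋯ < 1° < 2° < ⋯` on entries of positive value. -/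
def le (a b : MSTEntry) : Prop :=
  a.isCirc < b.isCirc ∨ (a.isCirc = b.isCirc ∧ a.key ≤ b.key)

end MSTEntry

/-- The shifted Young diagram of a strict partition `λ` of length `r`:
boxes `(i, j)` with `1 ≤ i ≤ r` and `i ≤ j ≤ λ_i + i - 1` (rows and columns 1-indexed). -/
def shiftedDiag (r : ℕ) (lam : ℕ → ℕ) : Set (ℕ × ℕ) :=
  {p | 1 ≤ p.1 ∧ p.1 ≤ r ∧ p.1 ≤ p.2 ∧ p.2 ≤ lam p.1 + p.1 - 1}

/-- `T` is a marked shifted tableau of the flagged strict partition `(λ, f)` whose unmarked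
and primed entries have numeric value at most `n` (normalized to `unmarked 0` off the
diagram). -/
def IsMST (n r : ℕ) (lam f : ℕ → ℕ) (T : ℕ × ℕ → MSTEntry) : Prop :=
  (∀ p, p ∉ shiftedDiag r lam → T p = .unmarked 0) ∧
  (∀ p ∈ shiftedDiag r lam, 1 ≤ (T p).val) ∧
  (∀ i j j', (i, j) ∈ shiftedDiag r lam → (i, j') ∈ shiftedDiag r lam → j ≤ j' →
    (T (i, j)).le (T (i, j'))) ∧
  (∀ i i' j, (i, j) ∈ shiftedDiag r lam → (i', j) ∈ shiftedDiag r lam → i ≤ i' →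
    (T (i, j)).le (T (i', j))) ∧
  (∀ i i' j k k', (i, j) ∈ shiftedDiag r lam → (i', j) ∈ shiftedDiag r lam → i < i' →
    T (i, j) = .unmarked k → T (i', j) = .unmarked k' → k < k') ∧
  (∀ i j j' k k', (i, j) ∈ shiftedDiag r lam → (i, j') ∈ shiftedDiag r lam → j < j' →
    T (i, j) = .prime k → T (i, j') = .prime k' → k < k') ∧
  (∀ i j j' k k', (i, j) ∈ shiftedDiag r lam → (i, j') ∈ shiftedDiag r lam → j < j' →
    T (i, j) = .circ k → T (i, j') = .circ k' → k < k') ∧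
  (∀ p ∈ shiftedDiag r lam, (T p).le (.circ (f p.1))) ∧
  (∀ p ∈ shiftedDiag r lam, ∀ k, (T p = .unmarked k ∨ T p = .prime k) → k ≤ n)

/-- The factor of the weight `(xz|b)^T` contributed by the entry at box `p`.  The convention
`b_{-i} = -b_{i+1}` is implemented by `bext`. -/
def mstFactor (x z : ℕ → R) (b : ℤ → R) (p : ℕ × ℕ) : MSTEntry → R
  | .unmarked k => x k + bext b ((p.2 : ℤ) - (p.1 : ℤ))
  | .prime k => x k - bext b ((p.2 : ℤ) - (p.1 : ℤ))
  | .circ k => z k + bext b ((k : ℤ) + (p.1 : ℤ) - (p.2 : ℤ))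

/-- The weight `(xz|b)^T` of a marked shifted tableau. -/
def mstWeight (r : ℕ) (lam : ℕ → ℕ) (x z : ℕ → R) (b : ℤ → R) (T : ℕ × ℕ → MSTEntry) : R :=
  ∏ i ∈ Finset.range r, ∏ j ∈ Finset.range (lam (i + 1)),
    mstFactor x z b (i + 1, i + 1 + j) (T (i + 1, i + 1 + j))

/-- The flagged factorial Q-function `Q_{λ,f}(x;z|b)`, with `n` x-variables. -/
def Qflag (n r : ℕ) (lam f : ℕ → ℕ) (x z : ℕ → R) (b : ℤ → R) : R :=
  ∑ᶠ T ∈ {T : ℕ × ℕ → MSTEntry | IsMST n r lam f T}, mstWeight r lam x z b T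

/-- Ivanov's factorial Q-function `Q_λ(x|b)`: the case of the zero flag (no circled
entries, so the z-variables do not occur). -/
def QIvanov (n r : ℕ) (lam : ℕ → ℕ) (x : ℕ → R) (b : ℤ → R) : R :=
  Qflag n r lam (fun _ => 0) x (fun _ => 0) b

/-- The skew Young diagram `κ/ν`: boxes `(i, j)` with `1 ≤ i ≤ r`, `ν_i < j ≤ κ_i`. -/
def skewDiag (r : ℕ) (kap nu : ℕ → ℕ) : Set (ℕ × ℕ) :=
  {p | 1 ≤ p.1 ∧ p.1 ≤ r ∧ nu p.1 < p.2 ∧ p.2 ≤ kap p.1}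

/-- `t` is a row-strict flagged tableau of `(κ/ν, f)` (normalized to `0` off the diagram). -/
def IsRST (r : ℕ) (kap nu f : ℕ → ℕ) (t : ℕ × ℕ → ℕ) : Prop :=
  (∀ p, p ∉ skewDiag r kap nu → t p = 0) ∧
  (∀ p ∈ skewDiag r kap nu, 1 ≤ t p) ∧
  (∀ i j j', (i, j) ∈ skewDiag r kap nu → (i, j') ∈ skewDiag r kap nu → j < j' →
    t (i, j) < t (i, j')) ∧
  (∀ i i' j, (i, j) ∈ skewDiag r kap nu → (i', j) ∈ skewDiag r kap nu → i ≤ i' →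
    t (i, j) ≤ t (i', j)) ∧
  (∀ p ∈ skewDiag r kap nu, t p ≤ f p.1)

/-- The weight `∏_{e ∈ T} (z_{|e|} + b_{|e| + r(e) - c(e)})` of a row-strict flagged tableau. -/
def rstWeight (r : ℕ) (kap nu : ℕ → ℕ) (z : ℕ → R) (b : ℤ → R) (t : ℕ × ℕ → ℕ) : R :=
  ∏ i ∈ Finset.range r, ∏ j ∈ Finset.range (kap (i + 1) - nu (i + 1)),
    (z (t (i + 1, nu (i + 1) + 1 + j)) +
      b ((t (i + 1, nu (i + 1) + 1 + j) : ℤ) + ((i : ℤ) + 1) - ((nu (i + 1) : ℤ) + 1 + (j : ℤ))))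

/-- The row-strict flagged skew factorial Schur polynomial `s̃_{κ/ν,f}(z|b)`. -/
def sTilde (r : ℕ) (kap nu f : ℕ → ℕ) (z : ℕ → R) (b : ℤ → R) : R :=
  ∑ᶠ t ∈ {t : ℕ × ℕ → ℕ | IsRST r kap nu f t}, rstWeight r kap nu z b t


/-! Removing the last box of a one-row tableau is a bijection onto the shorter tableaux whose
entries all precede the removed one. Sorting by the last entry therefore gives
`Q_{(r+1),(f+1)} = Q_{(r+1),(f)} + (z_{f+1} + b⋆_{f+1-r}) Q_{(r),(f)}` (the last entry is
`(f+1)°` or not) and, writing `Q⁽ⁿ⁾` for the zero flag and `n` variables,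
`Q⁽ⁿ⁺¹⁾_{(r+1)} = Q⁽ⁿ⁾_{(r+1)} + (x_{n+1} + b⋆_r) Q⁽ⁿ⁺¹⁾_{(r)} + (x_{n+1} - b⋆_r) Q⁽ⁿ⁾_{(r)}`
(the last entry is `n+1`, `(n+1)'` or at most `n`). The right-hand side satisfies the same
recursions: the first comes from `e_u^{[f+1]}(z) = e_u^{[f]}(z) (1 + z_{f+1} u)`, the second from
`q⁽ⁿ⁺¹⁾_u - q⁽ⁿ⁾_u = x_{n+1} u (q⁽ⁿ⁺¹⁾_u + q⁽ⁿ⁾_u)`. -/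

section PowerSeriesCoefficients

open PowerSeries

lemma coeff_geomSeries (a : R) (m : ℕ) : coeff m (geomSeries a) = a ^ m := by
  simp [geomSeries]

lemma geomSeries_eq_one_add (a : R) : geomSeries a = 1 + C a * X * geomSeries a := by
  ext (_ | m)
  · simp [coeff_geomSeries, mul_assoc]
  · simp [coeff_geomSeries, mul_assoc, coeff_one, pow_succ', coeff_succ_X_mul]

lemma constantCoeff_geomSeries (a : R) : constantCoeff (geomSeries a) = 1 := by
  rw [← coeff_zero_eq_constantCoeff_apply, coeff_geomSeries, pow_zero]

lemma coeff_succ_one_add_C_mul_X_mul (c : R) (φ : PowerSeries R) (m : ℕ) :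
    coeff (m + 1) ((1 + C c * X) * φ) = coeff (m + 1) φ + c * coeff m φ := by
  rw [add_mul, one_mul, mul_assoc, map_add, coeff_C_mul, coeff_succ_X_mul]

lemma coeff_succ_geomSeries_mul (a : R) (φ : PowerSeries R) (m : ℕ) :
    coeff (m + 1) (geomSeries a * φ) = coeff (m + 1) φ + a * coeff m (geomSeries a * φ) := by
  conv_lhs => rw [geomSeries_eq_one_add]
  rw [add_mul, one_mul, mul_assoc, mul_assoc, map_add, coeff_C_mul, coeff_succ_X_mul]

lemma coeffZ_natCast (m : ℕ) (φ : PowerSeries R) : coeffZ m φ = coeff m φ := by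
  simp [coeffZ]

lemma eSer_zero (c : ℕ → R) : eSer 0 c = 1 := by
  simp [eSer]

lemma eSer_natCast (p : ℕ) (c : ℕ → R) :
    eSer p c = ∏ i ∈ range p, (1 + C (c (i + 1)) * X) := by
  simp [eSer]

lemma eSer_natCast_add_one (p : ℕ) (c : ℕ → R) :
    eSer ((p : ℤ) + 1) c = eSer p c * (1 + C (c (p + 1)) * X) := by
  rw [← Nat.cast_succ, eSer_natCast, eSer_natCast, prod_range_succ]

lemma eSer_neg_natCast (m : ℕ) (c : ℕ → R) :
    eSer (-(m : ℤ)) c = ∏ i ∈ range m, geomSeries (c (i + 1)) := by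
  rcases m.eq_zero_or_pos with rfl | hm
  · simp [eSer]
  · rw [eSer, if_neg (by omega)]
    simp

lemma constantCoeff_eSer (k : ℤ) (c : ℕ → R) : constantCoeff (eSer k c) = 1 := by
  unfold eSer
  split_ifs <;> simp [map_prod, constantCoeff_geomSeries]

lemma constantCoeff_qSer (n : ℕ) (x : ℕ → R) : constantCoeff (qSer n x) = 1 := by
  simp [qSer, map_prod, constantCoeff_geomSeries]

lemma coeff_eSer_natCast_of_lt (c : ℕ → R) {p m : ℕ} (h : p < m) :
    coeff m (eSer p c) = 0 := by
  induction p generalizing m with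
  | zero => simp [eSer, coeff_one, h.ne']
  | succ p ih =>
    obtain ⟨m, rfl⟩ : ∃ m', m = m' + 1 := ⟨m - 1, by omega⟩
    rw [Nat.cast_succ, eSer_natCast_add_one, mul_comm, coeff_succ_one_add_C_mul_X_mul,
      ih (by omega), ih (by omega), mul_zero, add_zero]

lemma qSer_succ_sub (n : ℕ) (x : ℕ → R) :
    qSer (n + 1) x - qSer n x = C (x (n + 1)) * X * (qSer (n + 1) x + qSer n x) := by
  have hq : qSer (n + 1) x = qSer n x * ((1 + C (x (n + 1)) * X) * geomSeries (x (n + 1))) :=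
    prod_range_succ _ _
  rw [hq]
  linear_combination (qSer n x * (1 + C (x (n + 1)) * X)) * geomSeries_eq_one_add (x (n + 1))

-- `h` says that `Q' = Q (1 + a u)/(1 - a u)`.
lemma mul_one_add_C_mul_X_of_sub_eq {Q Q' : PowerSeries R} {a : R}
    (h : Q' - Q = C a * X * (Q' + Q)) (E : PowerSeries R) (c : R) :
    Q' * (E * (1 + C c * X)) =
      Q * (E * (1 + C c * X)) + X * (C (a + c) * (Q' * E) + C (a - c) * (Q * E)) := by
  rw [map_add, map_sub]
  linear_combination E * h

/-- `q_r^{[r-1]}(x|c)`. -/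
def qDiag (n : ℕ) (x c : ℕ → R) (r : ℕ) : R := qC r ((r : ℤ) - 1) n x c

lemma qDiag_zero (n : ℕ) (x c : ℕ → R) : qDiag n x c 0 = 1 := by
  simp [qDiag, qC, coeffZ, constantCoeff_qSer, constantCoeff_eSer]

lemma qDiag_succ (n : ℕ) (x c : ℕ → R) (r : ℕ) :
    qDiag n x c (r + 1) = coeff (r + 1) (qSer n x * eSer r c) := by
  rw [qDiag, qC, coeffZ_natCast, Nat.cast_succ, add_sub_cancel_right]

lemma qDiag_zero_left (x c : ℕ → R) (r : ℕ) : qDiag 0 x c (r + 1) = 0 := by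
  rw [qDiag_succ, qSer, prod_range_zero, one_mul, coeff_eSer_natCast_of_lt c (by omega)]

lemma qDiag_succ_succ (n r : ℕ) (x c : ℕ → R) (d : R) (hd : r ≠ 0 → d = c r) :
    qDiag (n + 1) x c (r + 1) = qDiag n x c (r + 1) +
      (x (n + 1) + d) * qDiag (n + 1) x c r + (x (n + 1) - d) * qDiag n x c r := by
  rcases r with _ | r
  · have h := congrArg (coeff 1) (qSer_succ_sub n x)
    simp only [map_sub, map_add, mul_assoc, coeff_C_mul, coeff_succ_X_mul,
      coeff_zero_eq_constantCoeff_apply, constantCoeff_qSer] at h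
    rw [qDiag_succ, qDiag_succ, Nat.cast_zero, eSer_zero, mul_one, mul_one, qDiag_zero,
      qDiag_zero]
    linear_combination h
  · rw [hd r.succ_ne_zero, qDiag_succ, qDiag_succ, qDiag_succ, qDiag_succ, Nat.cast_succ,
      eSer_natCast_add_one, mul_one_add_C_mul_X_of_sub_eq (qSer_succ_sub n x), map_add,
      coeff_succ_X_mul, map_add, coeff_C_mul, coeff_C_mul]
    ring

lemma qC_of_neg {m : ℤ} (hm : m < 0) (ℓ : ℤ) (n : ℕ) (x c : ℕ → R) : qC m ℓ n x c = 0 :=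
  if_neg (by omega)

lemma eC2_zero (f : ℕ) (ℓ : ℤ) (z c : ℕ → R) : eC2 0 f ℓ z c = 1 := by
  simp [eC2, coeffZ, constantCoeff_eSer]

lemma eC2_succ_self (f : ℕ) (z c : ℕ → R) : eC2 (f + 1 : ℕ) f 0 z c = 0 := by
  rw [eC2, coeffZ_natCast, eSer_zero, mul_one, coeff_eSer_natCast_of_lt z (Nat.lt_succ_self f)]

lemma eC2_succ_succ {k f : ℕ} (hk : k ≤ f) (z c : ℕ → R) :
    eC2 (k + 1 : ℕ) (f + 1 : ℕ) (-(f + 1 - k : ℕ)) z c =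
      eC2 (k + 1 : ℕ) f (-(f - k : ℕ)) z c +
        (z (f + 1) + c (f + 1 - k)) * eC2 k f (-(f + 1 - k : ℕ)) z c := by
  have hH : eSer (-(f + 1 - k : ℕ)) c = geomSeries (c (f + 1 - k)) * eSer (-(f - k : ℕ)) c := by
    rw [eSer_neg_natCast, eSer_neg_natCast, Nat.sub_add_comm hk, prod_range_succ, mul_comm]
  simp only [eC2, coeffZ_natCast]
  rw [Nat.cast_succ, eSer_natCast_add_one, mul_comm (eSer f z), mul_assoc,
    coeff_succ_one_add_C_mul_X_mul, hH, mul_left_comm, coeff_succ_geomSeries_mul,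
    mul_left_comm, ← hH]
  ring

end PowerSeriesCoefficients

section RightHandSide

def oneRowTerm (n : ℕ) (x z : ℕ → R) (b : ℤ → R) (r f k : ℕ) : R :=
  qC ((r : ℤ) - (k : ℤ)) ((r : ℤ) - (k : ℤ) - 1) n x (fun i => b (i : ℤ)) *
    eC2 (k : ℤ) (f : ℤ) ((k : ℤ) - (f : ℤ) - 1) z
      (fun i => bext b ((i : ℤ) + (k : ℤ) - (r : ℤ)))

variable (n : ℕ) (x z : ℕ → R) (b : ℤ → R)

lemma oneRowTerm_zero (r f : ℕ) : oneRowTerm n x z b r f 0 = qDiag n x (fun i => b i) r := by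
  simp [oneRowTerm, eC2_zero, qDiag]

lemma oneRowTerm_succ_self (r f : ℕ) : oneRowTerm n x z b r f (f + 1) = 0 := by
  rw [oneRowTerm, show ((f + 1 : ℕ) : ℤ) - f - 1 = 0 by push_cast; ring, eC2_succ_self, mul_zero]

lemma oneRowTerm_zero_left (f k : ℕ) : oneRowTerm n x z b 0 f (k + 1) = 0 := by
  rw [oneRowTerm, qC_of_neg (by omega), zero_mul]

lemma oneRowTerm_succ_succ {f k : ℕ} (hk : k ≤ f) (r : ℕ) :
    oneRowTerm n x z b (r + 1) (f + 1) (k + 1) = oneRowTerm n x z b (r + 1) f (k + 1) +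
      (z (f + 1) + bext b ((f : ℤ) + 1 - r)) * oneRowTerm n x z b r f k := by
  have hc : (fun i : ℕ => bext b ((i : ℤ) + ((k + 1 : ℕ) : ℤ) - ((r + 1 : ℕ) : ℤ))) =
      fun i : ℕ => bext b ((i : ℤ) + k - r) := by
    funext i; push_cast; ring_nf
  have hq : ((r + 1 : ℕ) : ℤ) - ((k + 1 : ℕ) : ℤ) = (r : ℤ) - k := by push_cast; ring
  simp only [oneRowTerm, hc, hq]
  rw [show ((k + 1 : ℕ) : ℤ) - ((f + 1 : ℕ) : ℤ) - 1 = -((f + 1 - k : ℕ) : ℤ) by omega,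
    show ((k + 1 : ℕ) : ℤ) - (f : ℤ) - 1 = -((f - k : ℕ) : ℤ) by omega,
    show (k : ℤ) - (f : ℤ) - 1 = -((f + 1 - k : ℕ) : ℤ) by omega, eC2_succ_succ hk,
    show ((f + 1 - k : ℕ) : ℤ) + k - r = (f : ℤ) + 1 - r by omega]
  ring

lemma sum_oneRowTerm_zero_left (f : ℕ) :
    ∑ k ∈ range (f + 1), oneRowTerm n x z b 0 f k = 1 := by
  rw [sum_range_succ', sum_eq_zero (fun k _ => oneRowTerm_zero_left n x z b f k), zero_add,
    oneRowTerm_zero, qDiag_zero]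

lemma sum_oneRowTerm_succ_succ (r f : ℕ) :
    ∑ k ∈ range (f + 2), oneRowTerm n x z b (r + 1) (f + 1) k =
      ∑ k ∈ range (f + 1), oneRowTerm n x z b (r + 1) f k +
        (z (f + 1) + bext b ((f : ℤ) + 1 - r)) *
          ∑ k ∈ range (f + 1), oneRowTerm n x z b r f k := by
  rw [sum_range_succ', sum_congr rfl fun k hk =>
      oneRowTerm_succ_succ n x z b (Nat.lt_succ_iff.mp (mem_range.mp hk)) r,
    sum_add_distrib, ← mul_sum, sum_range_succ (fun k => oneRowTerm n x z b (r + 1) f (k + 1)),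
    oneRowTerm_succ_self, add_zero, sum_range_succ' (oneRowTerm n x z b (r + 1) f),
    oneRowTerm_zero, oneRowTerm_zero]
  ring

end RightHandSide

namespace MSTEntry

/-- `a.Precedes b`: `a` may stand to the left of `b` in a row of a marked shifted tableau. -/
def Precedes : MSTEntry → MSTEntry → Prop
  | prime k, prime k' => k < k'
  | circ k, circ k' => k < k'
  | a, b => a.le b

lemma precedes_iff {a b : MSTEntry} :
    a.Precedes b ↔ a.le b ∧ (∀ k k', a = prime k → b = prime k' → k < k') ∧
      (∀ k k', a = circ k → b = circ k' → k < k') := by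
  cases a <;> cases b <;> simp [Precedes, le, isCirc, key] <;> omega

lemma le_refl (a : MSTEntry) : a.le a := Or.inr ⟨rfl, le_rfl⟩

end MSTEntry

def admissibleEntries (n f : ℕ) : Finset MSTEntry :=
  (Icc 1 n).image .prime ∪ (Icc 1 n).image .unmarked ∪ (Icc 1 f).image .circ

@[simp] lemma prime_mem_admissibleEntries {n f k : ℕ} :
    MSTEntry.prime k ∈ admissibleEntries n f ↔ 1 ≤ k ∧ k ≤ n := by
  simp [admissibleEntries]

@[simp] lemma unmarked_mem_admissibleEntries {n f k : ℕ} :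
    MSTEntry.unmarked k ∈ admissibleEntries n f ↔ 1 ≤ k ∧ k ≤ n := by
  simp [admissibleEntries]

@[simp] lemma circ_mem_admissibleEntries {n f k : ℕ} :
    MSTEntry.circ k ∈ admissibleEntries n f ↔ 1 ≤ k ∧ k ≤ f := by
  simp [admissibleEntries]

lemma mem_admissibleEntries_iff {n f : ℕ} {e : MSTEntry} :
    e ∈ admissibleEntries n f ↔
      1 ≤ e.val ∧ e.le (.circ f) ∧ ∀ k, (e = .unmarked k ∨ e = .prime k) → k ≤ n := by
  cases e <;> simp [MSTEntry.val, MSTEntry.le, MSTEntry.isCirc, MSTEntry.key]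

lemma mem_shiftedDiag_one {r : ℕ} {p : ℕ × ℕ} :
    p ∈ shiftedDiag 1 (fun _ => r) ↔ p.1 = 1 ∧ 1 ≤ p.2 ∧ p.2 ≤ r := by
  simp only [shiftedDiag, Set.mem_ofPred_eq]
  omega

def rowTableaux (n r f : ℕ) : Set (ℕ × ℕ → MSTEntry) :=
  {T | IsMST n 1 (fun _ => r) (fun _ => f) T}

lemma mem_rowTableaux {n r f : ℕ} {T : ℕ × ℕ → MSTEntry} :
    T ∈ rowTableaux n r f ↔
      (∀ p ∉ shiftedDiag 1 (fun _ => r), T p = .unmarked 0) ∧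
      (∀ j, 1 ≤ j → j ≤ r → T (1, j) ∈ admissibleEntries n f) ∧
      (∀ j j', 1 ≤ j → j < j' → j' ≤ r → (T (1, j)).Precedes (T (1, j'))) := by
  simp only [rowTableaux, IsMST, Set.mem_ofPred_eq, Prod.forall, mem_shiftedDiag_one]
  constructor
  · rintro ⟨h0, hval, hrow, -, -, hprime, hcirc, hflag, hn⟩
    refine ⟨h0, fun j hj hjr => ?_, fun j j' hj hjj' hj'r => ?_⟩
    · exact mem_admissibleEntries_iff.2
        ⟨hval 1 j ⟨rfl, hj, hjr⟩, hflag 1 j ⟨rfl, hj, hjr⟩, hn 1 j ⟨rfl, hj, hjr⟩⟩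
    · have hp : 1 = 1 ∧ 1 ≤ j ∧ j ≤ r := ⟨rfl, hj, by omega⟩
      have hp' : 1 = 1 ∧ 1 ≤ j' ∧ j' ≤ r := ⟨rfl, by omega, hj'r⟩
      exact MSTEntry.precedes_iff.2 ⟨hrow 1 j j' hp hp' hjj'.le,
        fun k k' => hprime 1 j j' k k' hp hp' hjj', fun k k' => hcirc 1 j j' k k' hp hp' hjj'⟩
  · rintro ⟨h0, hadm, hrow⟩
    have hadm' : ∀ i j, i = 1 ∧ 1 ≤ j ∧ j ≤ r → T (i, j) ∈ admissibleEntries n f := by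
      rintro i j ⟨rfl, hj, hjr⟩
      exact hadm j hj hjr
    have hprec : ∀ i j j', i = 1 ∧ 1 ≤ j ∧ j ≤ r → i = 1 ∧ 1 ≤ j' ∧ j' ≤ r → j < j' →
        (T (i, j)).Precedes (T (i, j')) := by
      rintro i j j' ⟨rfl, hj, -⟩ ⟨-, -, hj'r⟩ hjj'
      exact hrow j j' hj hjj' hj'r
    refine ⟨h0, fun i j hp => (mem_admissibleEntries_iff.1 (hadm' i j hp)).1, ?_, ?_, ?_,
      fun i j j' k k' hp hp' hjj' => (MSTEntry.precedes_iff.1 (hprec i j j' hp hp' hjj')).2.1 k k',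
      fun i j j' k k' hp hp' hjj' => (MSTEntry.precedes_iff.1 (hprec i j j' hp hp' hjj')).2.2 k k',
      fun i j hp => (mem_admissibleEntries_iff.1 (hadm' i j hp)).2.1,
      fun i j hp => (mem_admissibleEntries_iff.1 (hadm' i j hp)).2.2⟩
    · intro i j j' hp hp' hjj'
      rcases hjj'.eq_or_lt with rfl | hlt
      · exact MSTEntry.le_refl _
      · exact (MSTEntry.precedes_iff.1 (hprec i j j' hp hp' hlt)).1
    · rintro i i' j ⟨rfl, -⟩ ⟨rfl, -⟩ -
      exact MSTEntry.le_refl _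
    · rintro i i' j k k' ⟨rfl, -⟩ ⟨rfl, -⟩ h
      exact absurd h (lt_irrefl 1)

lemma rowTableaux_finite (n r f : ℕ) : (rowTableaux n r f).Finite := by
  have hmaps : Set.MapsTo (fun T (j : Fin r) => T (1, j + 1)) (rowTableaux n r f)
      (Set.univ.pi fun _ => (admissibleEntries n f : Set MSTEntry)) :=
    fun T hT j _ => (mem_rowTableaux.1 hT).2.1 _ (by omega) j.2
  refine Set.Finite.of_finite_image
    ((Set.Finite.pi fun _ => (admissibleEntries n f).finite_toSet).subset hmaps.image_subset) ?_
  intro T hT T' hT' h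
  funext p
  by_cases hp : p ∈ shiftedDiag 1 (fun _ => r)
  · obtain ⟨i, j⟩ := p
    obtain ⟨rfl, hj, hjr⟩ := mem_shiftedDiag_one.1 hp
    simpa [Nat.sub_add_cancel hj] using congrFun h ⟨j - 1, by omega⟩
  · rw [(mem_rowTableaux.1 hT).1 p hp, (mem_rowTableaux.1 hT').1 p hp]

lemma mstWeight_one_row (r : ℕ) (x z : ℕ → R) (b : ℤ → R) (T : ℕ × ℕ → MSTEntry) :
    mstWeight 1 (fun _ => r) x z b T =
      ∏ j ∈ range r, mstFactor x z b (1, j + 1) (T (1, j + 1)) := by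
  simp [mstWeight, add_comm]

def rowTableauxPreceding (n r f : ℕ) (e : MSTEntry) : Set (ℕ × ℕ → MSTEntry) :=
  {T ∈ rowTableaux n r f | ∀ j, 1 ≤ j → j ≤ r → (T (1, j)).Precedes e}

lemma rowTableauxPreceding_congr {n r f n' f' : ℕ} {e : MSTEntry}
    (h : ∀ a, a.Precedes e → (a ∈ admissibleEntries n f ↔ a ∈ admissibleEntries n' f')) :
    rowTableauxPreceding n r f e = rowTableauxPreceding n' r f' e := by
  ext T
  simp only [rowTableauxPreceding, Set.mem_ofPred_eq, mem_rowTableaux]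
  constructor <;> rintro ⟨⟨h0, hadm, hrow⟩, hprec⟩ <;>
    refine ⟨⟨h0, fun j hj hjr => ?_, hrow⟩, hprec⟩
  · exact (h _ (hprec j hj hjr)).1 (hadm j hj hjr)
  · exact (h _ (hprec j hj hjr)).2 (hadm j hj hjr)

lemma rowTableauxPreceding_eq_rowTableaux {n r f : ℕ} {e : MSTEntry}
    (h : ∀ a ∈ admissibleEntries n f, a.Precedes e) :
    rowTableauxPreceding n r f e = rowTableaux n r f :=
  Set.sep_eq_self_iff_mem_true.2 fun _ hT j hj hjr => h _ ((mem_rowTableaux.1 hT).2.1 j hj hjr)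

lemma update_mem_rowTableaux {n r f : ℕ} {e : MSTEntry} {T : ℕ × ℕ → MSTEntry}
    (hT : T ∈ rowTableauxPreceding n r f e) (he : e ∈ admissibleEntries n f) :
    Function.update T (1, r + 1) e ∈ rowTableaux n (r + 1) f := by
  obtain ⟨hT, hprec⟩ := hT
  obtain ⟨h0, hadm, hrow⟩ := mem_rowTableaux.1 hT
  have hold : ∀ j, j ≤ r → Function.update T (1, r + 1) e (1, j) = T (1, j) := fun j hj =>
    Function.update_of_ne (by simp; omega) _ _
  refine mem_rowTableaux.2 ⟨fun p hp => ?_, fun j hj hjr => ?_, fun j j' hj hjj' hj'r => ?_⟩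
  · have hp' : p ∉ shiftedDiag 1 (fun _ => r) := fun h => hp (by
      rw [mem_shiftedDiag_one] at h ⊢; omega)
    rw [Function.update_of_ne (by rintro rfl; simp [mem_shiftedDiag_one] at hp), h0 p hp']
  · rcases hjr.eq_or_lt with rfl | hjr
    · rwa [Function.update_self]
    · rw [hold j (by omega)]; exact hadm j hj (by omega)
  · rw [hold j (by omega)]
    rcases hj'r.eq_or_lt with rfl | hj'r
    · rw [Function.update_self]; exact hprec j hj (by omega)
    · rw [hold j' (by omega)]; exact hrow j j' hj hjj' (by omega)

lemma update_mem_rowTableauxPreceding {n r f : ℕ} {T : ℕ × ℕ → MSTEntry}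
    (hT : T ∈ rowTableaux n (r + 1) f) :
    Function.update T (1, r + 1) (.unmarked 0) ∈ rowTableauxPreceding n r f (T (1, r + 1)) := by
  obtain ⟨h0, hadm, hrow⟩ := mem_rowTableaux.1 hT
  have hold : ∀ j, j ≤ r → Function.update T (1, r + 1) (.unmarked 0) (1, j) = T (1, j) :=
    fun j hj => Function.update_of_ne (by simp; omega) _ _
  refine ⟨mem_rowTableaux.2 ⟨fun p hp => ?_, fun j hj hjr => ?_, fun j j' hj hjj' hj'r => ?_⟩,
    fun j hj hjr => ?_⟩
  · by_cases hpl : p = (1, r + 1)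
    · rw [hpl, Function.update_self]
    · rw [Function.update_of_ne hpl]
      refine h0 p fun hp' => hp (mem_shiftedDiag_one.2 ?_)
      have := mem_shiftedDiag_one.1 hp'
      obtain ⟨i, j⟩ := p
      simp only [Prod.mk.injEq] at hpl this ⊢
      omega
  · rw [hold j hjr]; exact hadm j hj (by omega)
  · rw [hold j (by omega), hold j' hj'r]; exact hrow j j' hj hjj' (by omega)
  · rw [hold j hjr]; exact hrow j (r + 1) hj (by omega) le_rfl

lemma finsum_rowTableaux_last_eq_mul {n r f : ℕ} {e : MSTEntry}
    (he : e ∈ admissibleEntries n f) (x z : ℕ → R) (b : ℤ → R) :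
    ∑ᶠ T ∈ {T ∈ rowTableaux n (r + 1) f | T (1, r + 1) = e},
        mstWeight 1 (fun _ => r + 1) x z b T =
      mstFactor x z b (1, r + 1) e *
        ∑ᶠ T ∈ rowTableauxPreceding n r f e, mstWeight 1 (fun _ => r) x z b T := by
  have hoff : ∀ {T}, T ∈ rowTableauxPreceding n r f e → T (1, r + 1) = .unmarked 0 :=
    fun hT => (mem_rowTableaux.1 hT.1).1 _ (by simp [mem_shiftedDiag_one])
  rw [mul_finsum_mem' _ _ ((rowTableaux_finite n r f).subset fun T hT => hT.1), eq_comm]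
  refine finsum_mem_eq_of_bijOn (fun T => Function.update T (1, r + 1) e)
    ⟨fun T hT => ⟨update_mem_rowTableaux hT he, Function.update_self ..⟩,
      fun T hT T' hT' h => ?_, fun T ⟨hT, hlast⟩ => ?_⟩ fun T _ => ?_
  · funext p
    by_cases hp : p = (1, r + 1)
    · rw [hp, hoff hT, hoff hT']
    · simpa [Function.update_of_ne hp] using congrFun h p
  · refine ⟨_, hlast ▸ update_mem_rowTableauxPreceding hT, ?_⟩
    simp only [Function.update_idem, ← hlast, Function.update_eq_self]
  · rw [mstWeight_one_row, mstWeight_one_row, prod_range_succ, Function.update_self, mul_comm]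
    congr 1
    exact prod_congr rfl fun j hj =>
      by rw [Function.update_of_ne (by simp at hj ⊢; omega)]

lemma Qflag_one_row_succ_eq_sum (n r f : ℕ) (x z : ℕ → R) (b : ℤ → R) :
    Qflag n 1 (fun _ => r + 1) (fun _ => f) x z b =
      ∑ e ∈ admissibleEntries n f, mstFactor x z b (1, r + 1) e *
        ∑ᶠ T ∈ rowTableauxPreceding n r f e, mstWeight 1 (fun _ => r) x z b T := by
  have hcover : rowTableaux n (r + 1) f = ⋃ e ∈ (admissibleEntries n f : Set MSTEntry),
      {T ∈ rowTableaux n (r + 1) f | T (1, r + 1) = e} := by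
    ext T
    simp only [Set.mem_iUnion, Set.mem_ofPred_eq, exists_prop, mem_coe]
    exact ⟨fun hT => ⟨_, (mem_rowTableaux.1 hT).2.1 _ le_add_self le_rfl, hT, rfl⟩,
      fun ⟨_, _, hT, _⟩ => hT⟩
  rw [Qflag, ← finsum_mem_coe_finset]
  change ∑ᶠ T ∈ rowTableaux n (r + 1) f, _ = _
  rw [hcover, finsum_mem_biUnion ?_ (admissibleEntries n f).finite_toSet
    fun e _ => (rowTableaux_finite n (r + 1) f).subset fun T hT => hT.1]
  · exact finsum_mem_congr rfl fun e he => finsum_rowTableaux_last_eq_mul he x z b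
  · intro e _ e' _ hne
    exact Set.disjoint_left.2 fun T hT hT' => hne (hT.2.symm.trans hT'.2)

section Recursions

variable (n r f : ℕ) (x z : ℕ → R) (b : ℤ → R)

lemma Qflag_one_row_zero : Qflag n 1 (fun _ => 0) (fun _ => f) x z b = 1 := by
  have h : rowTableaux n 0 f = {fun _ => .unmarked 0} := by
    ext T
    simp only [Set.mem_singleton_iff, mem_rowTableaux, mem_shiftedDiag_one]
    refine ⟨fun hT => funext fun p => hT.1 p (by omega), ?_⟩
    rintro rfl
    exact ⟨fun _ _ => rfl, fun _ _ _ => by omega, fun _ _ _ _ _ => by omega⟩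
  change ∑ᶠ T ∈ rowTableaux n 0 f, _ = 1
  rw [h, finsum_mem_singleton, mstWeight_one_row, prod_range_zero]

lemma Qflag_zero_one_row_succ : Qflag 0 1 (fun _ => r + 1) (fun _ => 0) x z b = 0 := by
  have hadm : admissibleEntries 0 0 = ∅ := by
    ext a; cases a <;> simp <;> omega
  rw [Qflag_one_row_succ_eq_sum, hadm, sum_empty]

lemma Qflag_one_row_succ_flag_succ :
    Qflag n 1 (fun _ => r + 1) (fun _ => f + 1) x z b =
      Qflag n 1 (fun _ => r + 1) (fun _ => f) x z b +
        (z (f + 1) + bext b ((f : ℤ) + 1 - r)) * Qflag n 1 (fun _ => r) (fun _ => f) x z b := by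
  have hadm : admissibleEntries n (f + 1) = insert (.circ (f + 1)) (admissibleEntries n f) := by
    ext a; cases a <;> simp; omega
  have hflag : ∀ e ∈ admissibleEntries n (f + 1), ∀ a, a.Precedes e →
      (a ∈ admissibleEntries n (f + 1) ↔ a ∈ admissibleEntries n f) := by
    intro e he a ha
    cases a <;> cases e <;> simp_all [MSTEntry.Precedes, MSTEntry.le, MSTEntry.isCirc]; omega
  have hfac : mstFactor x z b (1, r + 1) (.circ (f + 1)) =
      z (f + 1) + bext b ((f : ℤ) + 1 - r) := by
    simp only [mstFactor]; push_cast; ring_nf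
  rw [Qflag_one_row_succ_eq_sum, Qflag_one_row_succ_eq_sum, hadm, sum_insert (by simp), hfac,
    rowTableauxPreceding_congr (hflag _ (by simp)), rowTableauxPreceding_eq_rowTableaux, add_comm]
  · congr 1
    exact sum_congr rfl fun e he => by
      rw [rowTableauxPreceding_congr (hflag e (hadm ▸ mem_insert_of_mem he))]
  · intro a ha
    cases a <;> simp_all [MSTEntry.Precedes, MSTEntry.le, MSTEntry.isCirc]

lemma Qflag_succ_one_row_succ_flag_zero :
    Qflag (n + 1) 1 (fun _ => r + 1) (fun _ => 0) x z b =
      Qflag n 1 (fun _ => r + 1) (fun _ => 0) x z b +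
        (x (n + 1) + bext b r) * Qflag (n + 1) 1 (fun _ => r) (fun _ => 0) x z b +
        (x (n + 1) - bext b r) * Qflag n 1 (fun _ => r) (fun _ => 0) x z b := by
  have hadm : admissibleEntries (n + 1) 0 =
      insert (.unmarked (n + 1)) (insert (.prime (n + 1)) (admissibleEntries n 0)) := by
    ext a; cases a <;> simp <;> omega
  have hval : ∀ e, e ∈ admissibleEntries n 0 ∨ e = .prime (n + 1) → ∀ a, a.Precedes e →
      (a ∈ admissibleEntries (n + 1) 0 ↔ a ∈ admissibleEntries n 0) := by
    intro e he a ha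
    cases a <;> cases e <;>
      simp_all [MSTEntry.Precedes, MSTEntry.le, MSTEntry.isCirc, MSTEntry.key] <;> omega
  have hu : mstFactor x z b (1, r + 1) (.unmarked (n + 1)) = x (n + 1) + bext b r := by
    simp [mstFactor]
  have hp : mstFactor x z b (1, r + 1) (.prime (n + 1)) = x (n + 1) - bext b r := by
    simp [mstFactor]
  rw [Qflag_one_row_succ_eq_sum, Qflag_one_row_succ_eq_sum, hadm, sum_insert (by simp),
    sum_insert (by simp), rowTableauxPreceding_eq_rowTableaux (e := .unmarked (n + 1)),
    rowTableauxPreceding_congr (hval _ (Or.inr rfl)),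
    rowTableauxPreceding_eq_rowTableaux (e := .prime (n + 1)), hu, hp,
    sum_congr rfl fun e he => by rw [rowTableauxPreceding_congr (hval e (Or.inl he))]]
  · change _ = _ + _ * ∑ᶠ T ∈ rowTableaux (n + 1) r 0, _ + _ * ∑ᶠ T ∈ rowTableaux n r 0, _
    ring
  · intro a ha
    cases a <;> simp_all [MSTEntry.Precedes, MSTEntry.le, MSTEntry.isCirc, MSTEntry.key] <;> omega
  · intro a ha
    cases a <;> simp_all [MSTEntry.Precedes, MSTEntry.le, MSTEntry.isCirc, MSTEntry.key] <;> omega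

end Recursions

lemma Qflag_one_row_flag_zero (n r : ℕ) (x z : ℕ → R) (b : ℤ → R) :
    Qflag n 1 (fun _ => r) (fun _ => 0) x z b = qDiag n x (fun i => b i) r := by
  induction n generalizing r with
  | zero =>
    cases r with
    | zero => rw [Qflag_one_row_zero, qDiag_zero]
    | succ r => rw [Qflag_zero_one_row_succ, qDiag_zero_left]
  | succ n ih =>
    induction r with
    | zero => rw [Qflag_one_row_zero, qDiag_zero]
    | succ r ihr =>
      rw [Qflag_succ_one_row_succ_flag_zero, ih, ih, ihr,
        qDiag_succ_succ n r x (fun i => b i) (bext b r) fun hr => if_pos (by omega)]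

lemma Qflag_one_row (n f r : ℕ) (x z : ℕ → R) (b : ℤ → R) :
    Qflag n 1 (fun _ => r) (fun _ => f) x z b = ∑ k ∈ range (f + 1), oneRowTerm n x z b r f k := by
  induction f generalizing r with
  | zero => rw [sum_range_one, oneRowTerm_zero, Qflag_one_row_flag_zero]
  | succ f ih =>
    cases r with
    | zero => rw [Qflag_one_row_zero, sum_oneRowTerm_zero_left]
    | succ r => rw [Qflag_one_row_succ_flag_succ, ih, ih, sum_oneRowTerm_succ_succ]

/-- One-row case of the flagged factorial Q-function:
`Q_{(r),(f)}(x;z|b) = Σ_{k=0}^{f} q_{r−k}^{[r−k−1]}(x|b) · (e_k^{[f|k−f−1]}(z|τ^{k−r}b))^⋆`,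
for every number `n` of x-variables. -/
theorem statement_5 (R : Type*) [CommRing R] (n r f : ℕ) (x z : ℕ → R) (b : ℤ → R) :
    Qflag n 1 (fun _ => r) (fun _ => f) x z b =
      ∑ k ∈ Finset.range (f + 1),
        qC ((r : ℤ) - (k : ℤ)) ((r : ℤ) - (k : ℤ) - 1) n x (fun i => b (i : ℤ)) *
          eC2 (k : ℤ) (f : ℤ) ((k : ℤ) - (f : ℤ) - 1) z
            (fun i => bext b ((i : ℤ) + (k : ℤ) - (r : ℤ))) :=
  Qflag_one_row n f r x z b
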